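/- Let H be a complex inner product space and let q, c⁺, c⁻ : H → H be linear maps such that q is self-adjoint (q = q*), c⁺ + c⁻ = id, and (c⁻)* ∘ q ∘ c⁺ = 0. Then q ∘ c⁺ = (c⁺)* ∘ q, and likewise q ∘ c⁻ = (c⁻)* ∘ q. -/

import Mathlib

/-!
Work in the star ring of endomorphisms. From `c⁺* + c⁻* = 1` and `c⁻* q c⁺ = 0` one gets
`q c⁺ = c⁺* q c⁺`, which is self-adjoint because `q` is; taking adjoints gives `q c⁺ = c⁺* q`.
The hypothesis `c⁻* q c⁺ = 0` is symmetric in `c⁺, c⁻` (take adjoints), so the same argument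
applies to `c⁻`.
-/

section StarRing

variable {R : Type*} [Ring R] [StarRing R] {q p m : R}

theorem isSelfAdjoint_mul_of_star_mul_mul_eq_zero (hq : IsSelfAdjoint q) (hsum : p + m = 1)
    (horth : star m * q * p = 0) : IsSelfAdjoint (q * p) := by
  have hqp : q * p = star p * q * p := by
    calc q * p = star (p + m) * q * p := by rw [hsum, star_one, one_mul]
      _ = star p * q * p + star m * q * p := by rw [star_add, add_mul, add_mul]
      _ = star p * q * p := by rw [horth, add_zero]
  rw [hqp]
  exact hq.conjugate' p

theorem mul_eq_star_mul_of_star_mul_mul_eq_zero (hq : IsSelfAdjoint q) (hsum : p + m = 1)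
    (horth : star m * q * p = 0) : q * p = star p * q := by
  rw [← (isSelfAdjoint_mul_of_star_mul_mul_eq_zero hq hsum horth).star_eq, star_mul, hq.star_eq]

theorem mul_eq_star_mul_and_mul_eq_star_mul (hq : IsSelfAdjoint q) (hsum : p + m = 1)
    (horth : star m * q * p = 0) : q * p = star p * q ∧ q * m = star m * q := by
  have horth' : star p * q * m = 0 := by
    simpa only [star_mul, star_star, hq.star_eq, star_zero, mul_assoc] using congrArg star horth
  exact ⟨mul_eq_star_mul_of_star_mul_mul_eq_zero hq hsum horth,
    mul_eq_star_mul_of_star_mul_mul_eq_zero hq (by rwa [add_comm]) horth'⟩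

end StarRing

/-- If `q = q*`, `c⁺ + c⁻ = id` and `(c⁻)* q c⁺ = 0`, then `q c^± = (c^±)* q`
(q-self-adjointness of the Calderón projectors). -/
theorem stmt12 (H : Type*) [NormedAddCommGroup H] [InnerProductSpace ℂ H]
    [FiniteDimensional ℂ H]
    (q cp cm : H →ₗ[ℂ] H) (hq : LinearMap.adjoint q = q)
    (hsum : cp + cm = LinearMap.id)
    (horth : LinearMap.adjoint cm ∘ₗ q ∘ₗ cp = 0) :
    q ∘ₗ cp = LinearMap.adjoint cp ∘ₗ q ∧ q ∘ₗ cm = LinearMap.adjoint cm ∘ₗ q := by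
  simp only [← LinearMap.star_eq_adjoint, ← Module.End.mul_eq_comp, ← Module.End.one_eq_id]
    at hq hsum horth ⊢
  exact mul_eq_star_mul_and_mul_eq_star_mul hq hsum (by rwa [← mul_assoc] at horth)
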